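/- Let G be a k-connected graph with δ(G) > (3/2)k − 1. Then either the whole vertex set V(G) is a (k+1)-block, or G has at least two distinct (k+1)-blocks, each of size at least δ(G) + 1. -/

import Mathlib

variable {V : Type*}

/-- `S` separates `u` from `v` in `G`: neither lies in `S` and every walk meets `S`. -/
def SepBy (G : SimpleGraph V) (S : Set V) (u v : V) : Prop :=
  u ∉ S ∧ v ∉ S ∧ ∀ p : G.Walk u v, ∃ w ∈ p.support, w ∈ S

/-- `X` is (≤k)-inseparable: no set of at most `k` vertices separates two of its vertices. -/
def Insep (G : SimpleGraph V) (k : ℕ) (X : Set V) : Prop :=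
  ∀ S : Finset V, S.card ≤ k → ∀ u ∈ X, ∀ v ∈ X, ¬ SepBy G (S : Set V) u v

/-- A `k`-block: a maximal (≤(k-1))-inseparable set of at least `k` vertices. -/
def IsBlockN (G : SimpleGraph V) (k : ℕ) (B : Set V) : Prop :=
  k ≤ B.ncard ∧ Insep G (k - 1) B ∧
    ∀ B' : Set V, B ⊆ B' → Insep G (k - 1) B' → B' = B

/-- `(A,B)` is a separation of `G`. -/
def IsSepn (G : SimpleGraph V) (A B : Set V) : Prop :=
  A ∪ B = Set.univ ∧ ∀ a ∈ A \ B, ∀ b ∈ B \ A, ¬ G.Adj a b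

/-- A separation is proper if neither side contains the other. -/
def ProperSep (A B : Set V) : Prop := ¬ A ⊆ B ∧ ¬ B ⊆ A

/-- `G` is `k`-connected. -/
def KConn (G : SimpleGraph V) [Fintype V] (k : ℕ) : Prop :=
  k < Fintype.card V ∧ ∀ S : Finset V, S.card < k → ∀ u v : V, ¬ SepBy G (S : Set V) u v

/-!
Suppose some set of at most `k` vertices separates `G`, and choose a proper separation `(A, B)` of
order at most `k` (hence exactly `k`) with `|A \ B|` minimal. A separation `(X, Y)` of order `k`
splitting `A` would cross `(A, B)`. The orders of opposite corners of two crossing separations add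
up to `|A ∩ B| + |X ∩ Y| = 2k`; a corner of order at most `k` whose interior meets `A \ B`
contradicts the minimality of `A \ B`, and a corner of order less than `k` with nonempty interior
contradicts `k`-connectivity. What remains is excluded by counting: a vertex of `A \ B`, `B \ A`,
`X \ Y` or `Y \ X` has all its at least `δ` neighbours on its own side, and `δ > 3k/2 - 1` makes
these sides too large to fit. So `A` is `k`-inseparable, and maximal since `A ∩ B` separates every
vertex outside `A` from `A \ B`. Repeating the argument among separations whose small side avoids
this first block (the reversed separation `(B, A)` is one) yields a second block.
-/

open Set

section SetCard

variable {α : Type*} {s t r : Set α}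

theorem ncard_add_ncard_le_of_disjoint [Finite α] (hst : Disjoint s t) (h : s ∪ t ⊆ r) :
    s.ncard + t.ncard ≤ r.ncard := by
  rw [← ncard_union_eq hst]
  exact ncard_le_ncard h

theorem ncard_le_ncard_add_ncard [Finite α] (h : r ⊆ s ∪ t) : r.ncard ≤ s.ncard + t.ncard :=
  (ncard_le_ncard h).trans (ncard_union_le s t)

theorem inter_sdiff_union (s t r q : Set α) : (s ∩ r) \ (t ∪ q) = (s \ t) ∩ (r \ q) := by
  ext z
  simp only [mem_sdiff, mem_inter_iff, mem_union]
  tauto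

end SetCard

variable {G : SimpleGraph V} {k : ℕ} {A B X Y W Z : Set V} {u v x : V}

theorem minDegree_add_one_le_ncard [Fintype V] [DecidableRel G.Adj] (hx : x ∈ Z)
    (hN : G.neighborSet x ⊆ Z) : G.minDegree + 1 ≤ Z.ncard := by
  have hdeg : (G.neighborSet x).ncard = G.degree x := by
    rw [ncard_eq_toFinset_card', toFinset_card, SimpleGraph.card_neighborSet_eq_degree]
  calc G.minDegree + 1 ≤ (insert x (G.neighborSet x)).ncard := by
        rw [ncard_insert_of_notMem G.notMem_neighborSet_self, hdeg]
        exact Nat.succ_le_succ (G.minDegree_le_degree x)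
    _ ≤ Z.ncard := ncard_le_ncard (insert_subset hx hN)

namespace IsSepn

theorem symm (h : IsSepn G A B) : IsSepn G B A :=
  ⟨union_comm A B ▸ h.1, fun a ha b hb hab => h.2 b hb a ha hab.symm⟩

theorem mem_or_mem (h : IsSepn G A B) (x : V) : x ∈ A ∨ x ∈ B := by
  have : x ∈ A ∪ B := h.1 ▸ mem_univ x
  exact this

theorem mem_right_of_notMem (h : IsSepn G A B) (hx : x ∉ A) : x ∈ B :=
  (h.mem_or_mem x).resolve_left hx

theorem neighborSet_subset (h : IsSepn G A B) (hx : x ∈ A \ B) : G.neighborSet x ⊆ A :=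
  fun y hxy => by_contra fun hy => h.2 x hx y ⟨h.mem_right_of_notMem hy, hy⟩ hxy

theorem exists_mem_support_inter (h : IsSepn G A B) {a b : V} (p : G.Walk a b) (ha : a ∈ A)
    (hb : b ∉ A) : ∃ w ∈ p.support, w ∈ A ∩ B := by
  induction p with
  | nil => exact absurd ha hb
  | @cons a x b hax p ih =>
    by_cases hx : x ∈ A
    · obtain ⟨w, hw, hwAB⟩ := ih hx hb
      exact ⟨w, by simp [hw], hwAB⟩
    · by_cases haB : a ∈ B
      · exact ⟨a, by simp, ha, haB⟩
      · exact absurd hax (h.2 a ⟨ha, haB⟩ x ⟨h.mem_right_of_notMem hx, hx⟩)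

theorem sepBy (h : IsSepn G A B) (hu : u ∈ A \ B) (hv : v ∈ B \ A) : SepBy G (A ∩ B) u v :=
  ⟨fun h' => hu.2 h'.2, fun h' => hv.2 h'.1, fun p => h.exists_mem_support_inter p hu.1 hv.2⟩

theorem ncard_le_ncard_inter_add_ncard_inter [Finite V] (hXY : IsSepn G X Y) (Z : Set V) :
    Z.ncard ≤ (Z ∩ X).ncard + (Z ∩ Y).ncard :=
  ncard_le_ncard_add_ncard fun z hz => (hXY.mem_or_mem z).imp (⟨hz, ·⟩) (⟨hz, ·⟩)

theorem inter_union (hAB : IsSepn G A B) (hXY : IsSepn G X Y) : IsSepn G (A ∩ X) (B ∪ Y) := by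
  refine ⟨eq_univ_of_forall fun z => ?_, ?_⟩
  · have := hAB.mem_or_mem z
    have := hXY.mem_or_mem z
    simp only [mem_union, mem_inter_iff]
    tauto
  · rintro a ⟨⟨haA, haX⟩, ha⟩ b ⟨hb, hab⟩
    simp only [mem_union, not_or] at ha
    by_cases hbA : b ∈ A
    · have hbX : b ∉ X := fun h => hab ⟨hbA, h⟩
      exact hXY.2 a ⟨haX, ha.2⟩ b ⟨hXY.mem_right_of_notMem hbX, hbX⟩
    · exact hAB.2 a ⟨haA, ha.1⟩ b ⟨hAB.mem_right_of_notMem hbA, hbA⟩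

theorem ncard_corner_add_ncard_corner [Finite V] (hAB : IsSepn G A B) (hXY : IsSepn G X Y) :
    (A ∩ X ∩ (B ∪ Y)).ncard + (B ∩ Y ∩ (A ∪ X)).ncard = (A ∩ B).ncard + (X ∩ Y).ncard := by
  have hcup : A ∩ X ∩ (B ∪ Y) ∪ B ∩ Y ∩ (A ∪ X) = A ∩ B ∪ X ∩ Y := by
    ext z
    have := hAB.mem_or_mem z
    have := hXY.mem_or_mem z
    simp only [mem_union, mem_inter_iff]
    tauto
  have hcap : A ∩ X ∩ (B ∪ Y) ∩ (B ∩ Y ∩ (A ∪ X)) = A ∩ B ∩ (X ∩ Y) := by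
    ext z
    simp only [mem_union, mem_inter_iff]
    tauto
  rw [← ncard_union_add_ncard_inter, hcup, hcap, ncard_union_add_ncard_inter]

end IsSepn

theorem SepBy.exists_isSepn {S : Set V} (h : SepBy G S u v) :
    ∃ A B : Set V, IsSepn G A B ∧ u ∈ A \ B ∧ v ∈ B \ A ∧ A ∩ B ⊆ S := by
  set R : Set V := {z | ∃ p : G.Walk u z, ∀ w ∈ p.support, w ∉ S}
  have huR : u ∈ R := ⟨.nil, by simpa using h.1⟩
  have hvR : v ∉ R := fun ⟨p, hp⟩ => by
    obtain ⟨w, hw, hwS⟩ := h.2.2 p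
    exact hp w hw hwS
  refine ⟨R ∪ S, Rᶜ, ⟨eq_univ_of_forall fun z => by by_cases hz : z ∈ R <;> simp [hz], ?_⟩,
    ⟨.inl huR, fun h' => h' huR⟩, ⟨hvR, fun h' => h'.elim hvR h.2.1⟩,
    fun z ⟨hz, hzR⟩ => hz.resolve_left hzR⟩
  rintro a ⟨ha, haR⟩ b ⟨hbR, hb⟩ hab
  obtain ⟨p, hp⟩ : a ∈ R := by simpa using haR
  simp only [mem_union, not_or] at hb
  refine hbR ⟨p.concat hab, fun w hw => ?_⟩
  rw [SimpleGraph.Walk.support_concat, List.mem_append, List.mem_singleton] at hw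
  rcases hw with hw | rfl
  · exact hp w hw
  · exact hb.2

theorem Insep.not_sepBy [Finite V] (hW : Insep G k W) {S : Set V} (hS : S.ncard ≤ k)
    (hu : u ∈ W) (hv : v ∈ W) : ¬ SepBy G S u v := by
  have := hW S.toFinite.toFinset (by rwa [← ncard_eq_toFinset_card]) u hu v hv
  rwa [Finite.coe_toFinset] at this

theorem Insep.subset_of_inter_nonempty [Finite V] (hW : Insep G k W) (hXY : IsSepn G X Y)
    (hT : (X ∩ Y).ncard ≤ k) (h : (W ∩ (Y \ X)).Nonempty) : W ⊆ Y := by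
  obtain ⟨b, hbW, hb⟩ := h
  intro a haW
  by_contra haY
  exact hW.not_sepBy hT haW hbW (hXY.sepBy ⟨hXY.symm.mem_right_of_notMem haY, haY⟩ hb)

structure IsSmallSep (G : SimpleGraph V) (k : ℕ) (A B : Set V) : Prop where
  isSepn : IsSepn G A B
  left_nonempty : (A \ B).Nonempty
  right_nonempty : (B \ A).Nonempty
  ncard_inter_le : (A ∩ B).ncard ≤ k

theorem IsSmallSep.symm (h : IsSmallSep G k A B) : IsSmallSep G k B A :=
  ⟨h.isSepn.symm, h.right_nonempty, h.left_nonempty, inter_comm A B ▸ h.ncard_inter_le⟩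

theorem SepBy.exists_isSmallSep {S : Finset V} (h : SepBy G S u v) (hS : S.card ≤ k) :
    ∃ A B : Set V, IsSmallSep G k A B ∧ u ∈ A \ B ∧ v ∈ B \ A := by
  obtain ⟨A, B, hAB, hu, hv, hABS⟩ := h.exists_isSepn
  exact ⟨A, B, ⟨hAB, ⟨u, hu⟩, ⟨v, hv⟩, (ncard_le_ncard hABS).trans (by simpa)⟩, hu, hv⟩

theorem IsSmallSep.minDegree_add_one_le [Fintype V] [DecidableRel G.Adj]
    (h : IsSmallSep G k A B) : G.minDegree + 1 ≤ k + (A \ B).ncard := by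
  obtain ⟨a, ha⟩ := h.left_nonempty
  have := minDegree_add_one_le_ncard ha.1 (h.isSepn.neighborSet_subset ha)
  have := ncard_inter_add_ncard_sdiff_eq_ncard A B
  have := h.ncard_inter_le
  omega

theorem IsSmallSep.isBlockN [Finite V] (h : IsSmallSep G k A B) (hA : Insep G k A)
    (hcard : k + 1 ≤ A.ncard) : IsBlockN G (k + 1) A := by
  refine ⟨hcard, hA, fun A' hAA' hA' => ?_⟩
  obtain ⟨a, ha⟩ := h.left_nonempty
  exact (hA'.subset_of_inter_nonempty h.isSepn.symm (inter_comm B A ▸ h.ncard_inter_le)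
    ⟨a, hAA' ha.1, ha⟩).antisymm hAA'

namespace KConn

variable [Fintype V]

theorem not_sepBy (hconn : KConn G k) {S : Set V} (hS : S.ncard < k) : ¬ SepBy G S u v := by
  have := hconn.2 S.toFinite.toFinset (by rwa [← ncard_eq_toFinset_card]) u v
  rwa [Finite.coe_toFinset] at this

theorem le_ncard_inter (hconn : KConn G k) (hAB : IsSepn G A B) (hA : (A \ B).Nonempty)
    (hB : (B \ A).Nonempty) : k ≤ (A ∩ B).ncard := by
  obtain ⟨a, ha⟩ := hA
  obtain ⟨b, hb⟩ := hB
  by_contra! h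
  exact hconn.not_sepBy h (hAB.sepBy ha hb)

theorem ncard_inter_eq (hconn : KConn G k) (h : IsSmallSep G k A B) : (A ∩ B).ncard = k :=
  (h.ncard_inter_le).antisymm (hconn.le_ncard_inter h.isSepn h.left_nonempty h.right_nonempty)

theorem exists_adj_of_mem_inter (hconn : KConn G k) (h : IsSmallSep G k A B) {s : V}
    (hs : s ∈ A ∩ B) : ∃ w ∈ A \ B, G.Adj s w := by
  by_contra! hs'
  -- otherwise `(A \ {s}, B)` would be a proper separation of order `k - 1`
  have hsep : IsSepn G (A \ {s}) B := by
    refine ⟨eq_univ_of_forall fun z => ?_, ?_⟩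
    · by_cases hz : z = s
      · exact .inr (hz ▸ hs.2)
      · exact (h.isSepn.mem_or_mem z).imp (fun hzA => ⟨hzA, hz⟩) id
    · rintro a ⟨⟨haA, -⟩, haB⟩ b ⟨hbB, hb⟩ hab
      by_cases hbA : b ∈ A
      · obtain rfl : b = s := by simpa [hbA] using hb
        exact hs' a ⟨haA, haB⟩ hab.symm
      · exact h.isSepn.2 a ⟨haA, haB⟩ b ⟨hbB, hbA⟩ hab
  obtain ⟨a, ha⟩ := h.left_nonempty
  obtain ⟨b, hb⟩ := h.right_nonempty
  have := hconn.le_ncard_inter hsep ⟨a, ⟨ha.1, fun has => ha.2 (has ▸ hs.2)⟩, ha.2⟩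
    ⟨b, hb.1, fun hb' => hb.2 hb'.1⟩
  rw [← inter_sdiff_right_comm, ncard_sdiff_singleton_of_mem hs] at this
  have := (ncard_pos (toFinite _)).2 ⟨s, hs⟩
  have := hconn.ncard_inter_eq h
  omega

theorem le_ncard_corner (hconn : KConn G k) (hAB : IsSepn G A B) (hXY : IsSepn G X Y)
    (hQ : ((A \ B) ∩ (X \ Y)).Nonempty) (hB : (B \ A).Nonempty) :
    k ≤ (A ∩ X ∩ (B ∪ Y)).ncard :=
  hconn.le_ncard_inter (hAB.inter_union hXY) (inter_sdiff_union A B X Y ▸ hQ)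
    (hB.mono fun _ hz => ⟨.inl hz.1, fun h => hz.2 h.1⟩)

theorem ncard_add_ncard_inter_le (hconn : KConn G k) (hAB : IsSmallSep G k A B)
    (hXY : IsSmallSep G k X Y) (hC : A \ B ⊆ X ∩ Y) :
    (A \ B).ncard + (A ∩ B ∩ X).ncard ≤ k ∨ (Y \ X).ncard + (A ∩ B ∩ X).ncard ≤ k := by
  by_cases hQ : ((B \ A) ∩ (Y \ X)).Nonempty
  · left
    have := hconn.le_ncard_corner hAB.isSepn.symm hXY.isSepn.symm hQ hAB.left_nonempty
    have := hAB.isSepn.ncard_corner_add_ncard_corner hXY.isSepn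
    have : (A \ B).ncard + (A ∩ B ∩ X).ncard ≤ (A ∩ X ∩ (B ∪ Y)).ncard :=
      ncard_add_ncard_le_of_disjoint (disjoint_left.2 fun _ hz hz' => hz.2 hz'.1.2)
        (union_subset (fun _ hz => ⟨⟨hz.1, (hC hz).1⟩, .inr (hC hz).2⟩)
          fun _ hz => ⟨⟨hz.1.1, hz.2⟩, .inl hz.1.2⟩)
    have := hAB.ncard_inter_le
    have := hXY.ncard_inter_le
    omega
  · right
    refine (ncard_add_ncard_le_of_disjoint (disjoint_left.2 fun _ hz hz' => hz.2 hz'.2)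
      (union_subset (fun z hz => ?_) inter_subset_left)).trans hAB.ncard_inter_le
    have := hAB.isSepn.mem_or_mem z
    have := @hC z
    have : z ∉ (B \ A) ∩ (Y \ X) := fun h => hQ ⟨z, h⟩
    simp only [mem_sdiff, mem_inter_iff] at *
    tauto

theorem not_diff_subset_inter [DecidableRel G.Adj] (hconn : KConn G k)
    (hk : 3 * k ≤ 2 * G.minDegree + 1) (hAB : IsSmallSep G k A B) (hXY : IsSmallSep G k X Y) :
    ¬ A \ B ⊆ X ∩ Y := by
  intro hC
  have hX := hconn.ncard_add_ncard_inter_le hAB hXY hC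
  have hY := hconn.ncard_add_ncard_inter_le hAB hXY.symm (inter_comm X Y ▸ hC)
  have hS := hXY.isSepn.ncard_le_ncard_inter_add_ncard_inter (A ∩ B)
  have := hconn.ncard_inter_eq hAB
  have := hAB.minDegree_add_one_le
  have := hXY.minDegree_add_one_le
  have := hXY.symm.minDegree_add_one_le
  omega

theorem isBlockN_univ (hconn : KConn G k) (h : Insep G k univ) : IsBlockN G (k + 1) univ :=
  ⟨by rw [ncard_univ, Nat.card_eq_fintype_card]; exact hconn.1, h,
    fun _ h _ => univ_subset_iff.1 h⟩

end KConn

theorem exists_isSmallSep_of_not_insep (h : ¬ Insep G k univ) :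
    ∃ A B : Set V, IsSmallSep G k A B := by
  simp only [Insep, not_forall] at h
  obtain ⟨S, hS, u, -, v, -, huv⟩ := h
  obtain ⟨A, B, hAB, -⟩ := (not_not.1 huv).exists_isSmallSep hS
  exact ⟨A, B, hAB⟩

structure IsAtomicSep (G : SimpleGraph V) (k : ℕ) (W A B : Set V) : Prop where
  isSmallSep : IsSmallSep G k A B
  disjoint : Disjoint (A \ B) W
  minimal : ∀ X Y, IsSmallSep G k X Y → Disjoint (X \ Y) W → (A \ B).ncard ≤ (X \ Y).ncard

theorem IsSmallSep.exists_isAtomicSep [Finite V] (h : IsSmallSep G k A B)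
    (hW : Disjoint (A \ B) W) : ∃ A' B' : Set V, IsAtomicSep G k W A' B' := by
  obtain ⟨⟨A', B'⟩, ⟨h', hW'⟩, hmin⟩ := exists_min_image
    {p : Set V × Set V | IsSmallSep G k p.1 p.2 ∧ Disjoint (p.1 \ p.2) W}
    (fun p => (p.1 \ p.2).ncard) (toFinite _) ⟨(A, B), h, hW⟩
  exact ⟨A', B', h', hW', fun X Y hXY hXYW => hmin (X, Y) ⟨hXY, hXYW⟩⟩

namespace IsAtomicSep

variable [Fintype V]

theorem lt_ncard_corner (hconn : KConn G k) (hA : IsAtomicSep G k W A B) (hXY : IsSepn G X Y)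
    (hv : (A ∩ (Y \ X)).Nonempty) (hQ : ((A \ B) ∩ (X \ Y)).Nonempty) :
    k < (A ∩ X ∩ (B ∪ Y)).ncard := by
  obtain ⟨hAB, hW, hmin⟩ := hA
  obtain ⟨v, hvA, hvY⟩ := hv
  by_contra! hle
  have hdiff := inter_sdiff_union A B X Y
  have hcorner : IsSmallSep G k (A ∩ X) (B ∪ Y) :=
    ⟨hAB.isSepn.inter_union hXY, hdiff ▸ hQ,
      hAB.right_nonempty.mono fun _ hz => ⟨.inl hz.1, fun h => hz.2 h.1⟩, hle⟩
  have hCX : A \ B ⊆ X \ Y := by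
    have hle' := hmin _ _ hcorner (hdiff ▸ hW.mono_left inter_subset_left)
    rw [hdiff] at hle'
    rw [← eq_of_subset_of_ncard_le inter_subset_left hle']
    exact inter_subset_right
  -- `v ∈ A ∩ B` has a neighbour in `A \ B ⊆ X \ Y`, although all its neighbours lie in `Y`
  have hvB : v ∈ B := by_contra fun hvB => hvY.2 (hCX ⟨hvA, hvB⟩).1
  obtain ⟨w, hw, hvw⟩ := hconn.exists_adj_of_mem_inter hAB ⟨hvA, hvB⟩
  exact (hCX hw).2 (hXY.symm.neighborSet_subset hvY hvw)

theorem ncard_opposite_corner_lt (hconn : KConn G k) (hA : IsAtomicSep G k W A B)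
    (hXY : IsSmallSep G k X Y) (hv : (A ∩ (Y \ X)).Nonempty)
    (hQ : ((A \ B) ∩ (X \ Y)).Nonempty) : (B ∩ Y ∩ (A ∪ X)).ncard < k := by
  have := hA.lt_ncard_corner hconn hXY.isSepn hv hQ
  have := hA.isSmallSep.isSepn.ncard_corner_add_ncard_corner hXY.isSepn
  have := hA.isSmallSep.ncard_inter_le
  have := hXY.ncard_inter_le
  omega

theorem disjoint_opposite_corner (hconn : KConn G k) (hA : IsAtomicSep G k W A B)
    (hXY : IsSmallSep G k X Y) (hv : (A ∩ (Y \ X)).Nonempty)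
    (hQ : ((A \ B) ∩ (X \ Y)).Nonempty) : Disjoint (B \ A) (Y \ X) := by
  by_contra hQ'
  have := hconn.le_ncard_corner hA.isSmallSep.isSepn.symm hXY.isSepn.symm
    (not_disjoint_iff_nonempty_inter.1 hQ') hA.isSmallSep.left_nonempty
  have := hA.ncard_opposite_corner_lt hconn hXY hv hQ
  omega

variable [DecidableRel G.Adj]

theorem disjoint_of_inter_nonempty (hconn : KConn G k) (hk : 3 * k ≤ 2 * G.minDegree + 1)
    (hA : IsAtomicSep G k W A B) (hXY : IsSmallSep G k X Y) (hu : (A ∩ (X \ Y)).Nonempty)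
    (hv : (A ∩ (Y \ X)).Nonempty) (hQ : ((A \ B) ∩ (X \ Y)).Nonempty) :
    Disjoint (A \ B) (Y \ X) := by
  by_contra hQ'
  replace hQ' := not_disjoint_iff_nonempty_inter.1 hQ'
  have hP4 := hA.ncard_opposite_corner_lt hconn hXY hv hQ
  have hQ4 := hA.disjoint_opposite_corner hconn hXY hv hQ
  have hP3 := hA.ncard_opposite_corner_lt hconn hXY.symm hu hQ'
  have hQ3 := hA.disjoint_opposite_corner hconn hXY.symm hu hQ'
  have hD : B \ A ⊆ X ∩ Y := fun z hz => by
    have := disjoint_left.1 hQ3 hz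
    have := disjoint_left.1 hQ4 hz
    have := hXY.isSepn.mem_or_mem z
    simp only [mem_sdiff, mem_inter_iff] at *
    tauto
  have h4 : (A ∩ B ∩ Y).ncard + (B \ A).ncard ≤ (B ∩ Y ∩ (A ∪ X)).ncard :=
    ncard_add_ncard_le_of_disjoint (disjoint_left.2 fun _ hz hz' => hz'.2 hz.1.1)
      (union_subset (fun _ hz => ⟨⟨hz.1.2, hz.2⟩, .inl hz.1.1⟩)
        fun _ hz => ⟨⟨hz.1, (hD hz).2⟩, .inr (hD hz).1⟩)
  have h3 : (A ∩ B ∩ X).ncard + (B \ A).ncard ≤ (B ∩ X ∩ (A ∪ Y)).ncard :=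
    ncard_add_ncard_le_of_disjoint (disjoint_left.2 fun _ hz hz' => hz'.2 hz.1.1)
      (union_subset (fun _ hz => ⟨⟨hz.1.2, hz.2⟩, .inl hz.1.1⟩)
        fun _ hz => ⟨⟨hz.1, (hD hz).1⟩, .inr (hD hz).2⟩)
  have hS := hXY.isSepn.ncard_le_ncard_inter_add_ncard_inter (A ∩ B)
  have := hconn.ncard_inter_eq hA.isSmallSep
  have := hA.isSmallSep.symm.minDegree_add_one_le
  omega

theorem inter_nonempty_of_inter_nonempty (hconn : KConn G k) (hk : k ≤ G.minDegree)
    (hW : Insep G k W) (hWcard : W.Nonempty → k ≤ W.ncard) (hA : IsAtomicSep G k W A B)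
    (hXY : IsSmallSep G k X Y) (hv : (A ∩ (Y \ X)).Nonempty)
    (hQ : ((A \ B) ∩ (X \ Y)).Nonempty) : ((A \ B) ∩ (Y \ X)).Nonempty := by
  by_contra hQ'
  rw [← not_disjoint_iff_nonempty_inter, not_not] at hQ'
  have hP4 := hA.ncard_opposite_corner_lt hconn hXY hv hQ
  have hQ4 := hA.disjoint_opposite_corner hconn hXY hv hQ
  have hBY : (B ∩ Y).ncard < k := by
    refine (ncard_le_ncard (t := B ∩ Y ∩ (A ∪ X)) fun z hz => ⟨hz, ?_⟩).trans_lt hP4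
    by_contra h
    rw [mem_union, not_or] at h
    exact disjoint_left.1 hQ4 ⟨hz.1, h.1⟩ ⟨hz.2, h.2⟩
  by_cases hWY : (W ∩ (Y \ X)).Nonempty
  · have hWB : W ⊆ B ∩ Y := fun z hz =>
      ⟨by_contra fun hzB => disjoint_right.1 hA.disjoint hz
        ⟨hA.isSmallSep.isSepn.symm.mem_right_of_notMem hzB, hzB⟩,
       hW.subset_of_inter_nonempty hXY.isSepn hXY.ncard_inter_le hWY hz⟩
    have := hWcard (hWY.mono inter_subset_left)
    have := ncard_le_ncard hWB
    omega
  · have hC := hA.minimal Y X hXY.symm (disjoint_iff_inter_eq_empty.2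
      (not_nonempty_iff_eq_empty.1 (inter_comm W _ ▸ hWY)))
    obtain ⟨x, hxC, hxX⟩ := hQ
    have hdeg := minDegree_add_one_le_ncard (Z := A ∩ X) ⟨hxC.1, hxX.1⟩ <| subset_inter
      (hA.isSmallSep.isSepn.neighborSet_subset hxC) (hXY.isSepn.neighborSet_subset hxX)
    have hAX : (A ∩ X).ncard ≤ (A \ B).ncard + (A ∩ B ∩ X).ncard :=
      ncard_le_ncard_add_ncard fun z hz => by
        by_cases hzB : z ∈ B
        · exact .inr ⟨⟨hz.1, hzB⟩, hz.2⟩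
        · exact .inl ⟨hz.1, hzB⟩
    have hYS : Y \ X ⊆ A ∩ B := fun z hz => by
      have := hA.isSmallSep.isSepn.mem_or_mem z
      have : z ∉ A \ B := fun h => disjoint_left.1 hQ' h hz
      have : z ∉ B \ A := fun h => disjoint_left.1 hQ4 h hz
      simp only [mem_sdiff, mem_inter_iff] at *
      tauto
    have hS : (Y \ X).ncard + (A ∩ B ∩ X).ncard ≤ (A ∩ B).ncard :=
      ncard_add_ncard_le_of_disjoint (disjoint_left.2 fun _ hz hz' => hz.2 hz'.2)
        (union_subset hYS inter_subset_left)
    have := hA.isSmallSep.ncard_inter_le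
    omega

theorem disjoint_diff (hconn : KConn G k) (hk : 3 * k ≤ 2 * G.minDegree + 1)
    (hW : Insep G k W) (hWcard : W.Nonempty → k ≤ W.ncard) (hA : IsAtomicSep G k W A B)
    (hXY : IsSmallSep G k X Y) (hu : (A ∩ (X \ Y)).Nonempty) (hv : (A ∩ (Y \ X)).Nonempty) :
    Disjoint (A \ B) (X \ Y) := by
  by_contra hQ
  rw [not_disjoint_iff_nonempty_inter] at hQ
  exact not_disjoint_iff_nonempty_inter.2
    (hA.inter_nonempty_of_inter_nonempty hconn (by omega) hW hWcard hXY hv hQ)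
    (hA.disjoint_of_inter_nonempty hconn hk hXY hu hv hQ)

theorem insep (hconn : KConn G k) (hk : 3 * k ≤ 2 * G.minDegree + 1)
    (hW : Insep G k W) (hWcard : W.Nonempty → k ≤ W.ncard) (hA : IsAtomicSep G k W A B) :
    Insep G k A := by
  intro S hS u hu v hv huv
  obtain ⟨X, Y, hXY, huX, hvY⟩ := huv.exists_isSmallSep hS
  have hX := hA.disjoint_diff hconn hk hW hWcard hXY ⟨u, hu, huX⟩ ⟨v, hv, hvY⟩
  have hY := hA.disjoint_diff hconn hk hW hWcard hXY.symm ⟨v, hv, hvY⟩ ⟨u, hu, huX⟩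
  refine hconn.not_diff_subset_inter hk hA.isSmallSep hXY fun z hz => ?_
  have := hXY.isSepn.mem_or_mem z
  have := disjoint_left.1 hX hz
  have := disjoint_left.1 hY hz
  simp only [mem_sdiff, mem_inter_iff] at *
  tauto

theorem isBlockN (hconn : KConn G k) (hk : 3 * k ≤ 2 * G.minDegree + 1)
    (hW : Insep G k W) (hWcard : W.Nonempty → k ≤ W.ncard) (hA : IsAtomicSep G k W A B) :
    IsBlockN G (k + 1) A ∧ G.minDegree + 1 ≤ A.ncard := by
  obtain ⟨a, ha⟩ := hA.isSmallSep.left_nonempty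
  have hcard := minDegree_add_one_le_ncard ha.1 (hA.isSmallSep.isSepn.neighborSet_subset ha)
  exact ⟨hA.isSmallSep.isBlockN (hA.insep hconn hk hW hWcard) (by omega), hcard⟩

end IsAtomicSep

theorem stmt5_general [Fintype V] (G : SimpleGraph V) [DecidableRel G.Adj]
    (k : ℕ) (hconn : KConn G k)
    (hδ : (3 : ℝ) / 2 * k - 1 < (G.minDegree : ℝ)) :
    IsBlockN G (k + 1) Set.univ ∨
      ∃ B₁ B₂ : Set V, B₁ ≠ B₂ ∧ IsBlockN G (k + 1) B₁ ∧ IsBlockN G (k + 1) B₂ ∧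
        G.minDegree + 1 ≤ B₁.ncard ∧ G.minDegree + 1 ≤ B₂.ncard := by
  have hk : 3 * k ≤ 2 * G.minDegree + 1 := by
    have : (3 * k : ℝ) < 2 * G.minDegree + 2 := by linarith
    have : 3 * k < 2 * G.minDegree + 2 := by exact_mod_cast this
    omega
  by_cases hU : Insep G k univ
  · exact .inl (hconn.isBlockN_univ hU)
  obtain ⟨A₀, B₀, h₀⟩ := exists_isSmallSep_of_not_insep hU
  obtain ⟨A₁, B₁, h₁⟩ := h₀.exists_isAtomicSep (disjoint_empty _)
  obtain ⟨hb₁, hc₁⟩ :=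
    h₁.isBlockN hconn hk (fun _ _ _ h => h.elim) fun h => absurd h not_nonempty_empty
  obtain ⟨A₂, B₂, h₂⟩ := h₁.isSmallSep.symm.exists_isAtomicSep disjoint_sdiff_left
  obtain ⟨hb₂, hc₂⟩ := h₂.isBlockN hconn hk hb₁.2.1 fun _ => by omega
  refine .inr ⟨A₁, A₂, fun h => ?_, hb₁, hb₂, hc₁, hc₂⟩
  obtain ⟨a, ha⟩ := h₂.isSmallSep.left_nonempty
  exact disjoint_left.1 h₂.disjoint ha (h ▸ ha.1)

theorem stmt5 [Fintype V] [Nonempty V] (G : SimpleGraph V) [DecidableRel G.Adj]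
    (k : ℕ) (hconn : KConn G k)
    (hδ : (3 : ℝ) / 2 * k - 1 < (G.minDegree : ℝ)) :
    IsBlockN G (k + 1) Set.univ ∨
      ∃ B₁ B₂ : Set V, B₁ ≠ B₂ ∧ IsBlockN G (k + 1) B₁ ∧ IsBlockN G (k + 1) B₂ ∧
        G.minDegree + 1 ≤ B₁.ncard ∧ G.minDegree + 1 ≤ B₂.ncard :=
  stmt5_general G k hconn hδ
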